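/- Let (B, c_B) be a smooth compact complex irreducible real algebraic curve and let L ∈ Pic(B) satisfy c_B*(L) = L. Then for every divisor D associated to L there exists a meromorphic function f_D on B such that div(f_D) = c_B(D) − D and f_D · conj(f_D ∘ c_B) is the constant function +1 or the constant function −1. -/

import Mathlib

noncomputable section

open Function Set

/-- A smooth compact complex irreducible algebraic curve `B`, equipped with a real
structure `cB` (an antiholomorphic involution of `B`), presented through its
topological space of points, its field of meromorphic functions `Mero`, the
divisor-of-zeros-and-poles map `div`, the antiholomorphic pull-back
`σ : f ↦ conj (f ∘ cB)` on meromorphic functions, and the evaluation of meromorphic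
functions at points of `B` (with value `∞` at poles).  The complex-analytic
structure itself is implicit in this data. -/
structure RealCurve where
  /-- the points of the curve -/
  B : Type
  [topB : TopologicalSpace B]
  [compactB : CompactSpace B]
  [connectedB : ConnectedSpace B]
  [t2B : T2Space B]
  /-- the real structure: a continuous (antiholomorphic) involution of `B` -/
  cB : B → B
  cB_cont : Continuous cB
  cB_invol : Function.Involutive cB
  /-- the field of meromorphic functions on `B` -/
  Mero : Type
  [fieldMero : Field Mero]
  [algebraMero : Algebra ℂ Mero]
  /-- the divisor of zeros and poles of a meromorphic function
  (with the convention `div 0 = 0`) -/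
  div : Mero → (B →₀ ℤ)
  div_mul : ∀ f g : Mero, f ≠ 0 → g ≠ 0 → div (f * g) = div f + div g
  div_algebraMap : ∀ z : ℂ, z ≠ 0 → div (algebraMap ℂ Mero z) = 0
  div_degree : ∀ f : Mero, f ≠ 0 → (div f).sum (fun _ n => n) = 0
  div_eq_zero_iff : ∀ f : Mero, f ≠ 0 → (div f = 0 ↔ ∃ z : ℂ, f = algebraMap ℂ Mero z)
  /-- the antiholomorphic pull-back `σ f = conj (f ∘ cB)`, a ring automorphism of the
  field of meromorphic functions -/
  sigma : Mero ≃+* Mero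
  sigma_invol : ∀ f, sigma (sigma f) = f
  sigma_algebraMap : ∀ z : ℂ,
      sigma (algebraMap ℂ Mero z) = algebraMap ℂ Mero (starRingEnd ℂ z)
  div_sigma : ∀ f : Mero, div (sigma f) = (div f).mapDomain cB
  /-- the value of a meromorphic function at a point of `B`, equal to `∞` at poles -/
  eval : Mero → B → OnePoint ℂ
  eval_algebraMap : ∀ (z : ℂ) (x : B), eval (algebraMap ℂ Mero z) x = (z : OnePoint ℂ)
  eval_sigma : ∀ (f : Mero) (x : B),
      eval (sigma f) x = OnePoint.map (starRingEnd ℂ) (eval f (cB x))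
  eval_infty_iff : ∀ (f : Mero) (x : B), f ≠ 0 →
      (eval f x = OnePoint.infty ↔ div f x < 0)
  eval_zero_iff : ∀ (f : Mero) (x : B), f ≠ 0 →
      (eval f x = ((0 : ℂ) : OnePoint ℂ) ↔ 0 < div f x)

namespace RealCurve

attribute [instance] topB compactB connectedB t2B fieldMero algebraMero

variable (C : RealCurve)

/-- The push-forward `c_B(D)` of a divisor `D` under the real structure. -/
def conjDiv (D : C.B →₀ ℤ) : C.B →₀ ℤ := D.mapDomain C.cB

/-- A divisor is principal if it is the divisor of a nonzero meromorphic function. -/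
def IsPrincipal (D : C.B →₀ ℤ) : Prop := ∃ f : C.Mero, f ≠ 0 ∧ C.div f = D

/-- Linear equivalence of divisors.  A line bundle `L ∈ Pic(B)` is identified with
the linear equivalence class of its associated divisors; e.g. `c_B^*(L) = L` means
`LinEquiv (conjDiv D) D` for the divisors `D` associated to `L`, and
`c_B^*(L) = L^*` means `LinEquiv (conjDiv D) (-D)`. -/
def LinEquiv (D D' : C.B →₀ ℤ) : Prop := C.IsPrincipal (D - D')

/-- The real part `ℝB` of the curve: the fixed point set of `c_B`. -/
def RB : Type := {x : C.B // C.cB x = x}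

instance : TopologicalSpace C.RB := by unfold RB; infer_instance

/-- The meromorphic function `f` takes a non-negative real value (possibly `∞`)
at the point `x`. -/
def NonnegAt (f : C.Mero) (x : C.B) : Prop :=
  C.eval f x = OnePoint.infty ∨ ∃ r : ℝ, 0 ≤ r ∧ C.eval f x = ((r : ℂ) : OnePoint ℂ)

/-- The meromorphic function `f` takes a non-positive real value (possibly `∞`)
at the point `x`. -/
def NonposAt (f : C.Mero) (x : C.B) : Prop :=
  C.eval f x = OnePoint.infty ∨ ∃ r : ℝ, r ≤ 0 ∧ C.eval f x = ((r : ℂ) : OnePoint ℂ)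

end RealCurve

/-! If `div g = c_B(D) - D`, then `σ g` has the opposite divisor, so `g · σ g` has no zeros or
poles and is a constant `r`. This constant is fixed by `σ`, i.e. real, and rescaling `g` by
the real number `1 / √|r|` turns it into `r / |r| = ±1`. -/

theorem exists_mul_self_mul_eq_one_or_eq_neg_one {r : ℝ} (hr : r ≠ 0) :
    ∃ c : ℝ, c ≠ 0 ∧ (c * c * r = 1 ∨ c * c * r = -1) := by
  have habs : 0 < |r| := abs_pos.2 hr
  refine ⟨(√|r|)⁻¹, by positivity, ?_⟩
  rw [← mul_inv, Real.mul_self_sqrt habs.le]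
  rcases abs_cases r with ⟨h, -⟩ | ⟨h, -⟩
  · left; rw [h]; exact inv_mul_cancel₀ hr
  · right; rw [h, inv_neg, neg_mul, inv_mul_cancel₀ hr]

namespace RealCurve

variable (C : RealCurve)

theorem conjDiv_conjDiv (D : C.B →₀ ℤ) : C.conjDiv (C.conjDiv D) = D := by
  rw [conjDiv, conjDiv, ← Finsupp.mapDomain_comp, C.cB_invol.comp_self, Finsupp.mapDomain_id]

theorem conjDiv_sub (D E : C.B →₀ ℤ) : C.conjDiv (D - E) = C.conjDiv D - C.conjDiv E :=
  Finsupp.mapDomain_sub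

theorem div_sigma_eq_neg {f : C.Mero} {D : C.B →₀ ℤ} (h : C.div f = C.conjDiv D - D) :
    C.div (C.sigma f) = -C.div f := by
  rw [C.div_sigma, h]
  change C.conjDiv (C.conjDiv D - D) = _
  rw [conjDiv_sub, conjDiv_conjDiv, neg_sub]

theorem sigma_mul_sigma_self (f : C.Mero) : C.sigma (f * C.sigma f) = f * C.sigma f := by
  rw [map_mul, C.sigma_invol, mul_comm]

theorem conj_eq_of_sigma_algebraMap {z : ℂ}
    (h : C.sigma (algebraMap ℂ C.Mero z) = algebraMap ℂ C.Mero z) : starRingEnd ℂ z = z :=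
  (algebraMap ℂ C.Mero).injective (by rw [← C.sigma_algebraMap, h])

theorem exists_real_mul_sigma_eq {f : C.Mero} (hf : f ≠ 0) (h : C.div (C.sigma f) = -C.div f) :
    ∃ r : ℝ, r ≠ 0 ∧ f * C.sigma f = algebraMap ℂ C.Mero r := by
  have hσ : C.sigma f ≠ 0 := (map_ne_zero _).2 hf
  have hdiv : C.div (f * C.sigma f) = 0 := by rw [C.div_mul _ _ hf hσ, h, add_neg_cancel]
  obtain ⟨z, hz⟩ := (C.div_eq_zero_iff _ (mul_ne_zero hf hσ)).1 hdiv
  have hreal : (z.re : ℂ) = z :=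
    Complex.conj_eq_iff_re.1 (C.conj_eq_of_sigma_algebraMap (hz ▸ C.sigma_mul_sigma_self f))
  refine ⟨z.re, fun h0 => mul_ne_zero hf hσ ?_, hreal ▸ hz⟩
  rw [hz, ← hreal, h0, Complex.ofReal_zero, map_zero]

theorem algebraMap_ofReal_mul_sigma (c : ℝ) (f : C.Mero) :
    algebraMap ℂ C.Mero c * f * C.sigma (algebraMap ℂ C.Mero c * f) =
      algebraMap ℂ C.Mero (c * c : ℝ) * (f * C.sigma f) := by
  rw [map_mul, C.sigma_algebraMap, Complex.conj_ofReal, Complex.ofReal_mul, map_mul]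
  ring

end RealCurve

/-- **Lemma (lemmaL).**  Let `(B, c_B)` be a smooth compact complex irreducible real
algebraic curve and let `L ∈ Pic (B)` be a line bundle such that `c_B^*(L) = L`
(i.e. `c_B(D)` is linearly equivalent to `D` for the divisors `D` associated to `L`).
Then for every divisor `D` associated to `L` there exists a meromorphic function
`f_D` on `B` such that `div (f_D) = c_B(D) - D` and
`f_D ⬝ conj (f_D ∘ c_B) = +1` or `f_D ⬝ conj (f_D ∘ c_B) = -1`
(as constant functions; `f ⬝ conj (f ∘ c_B) = f * σ f`). -/
theorem stmt_0 (C : RealCurve) (D : C.B →₀ ℤ)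
    (hL : C.LinEquiv (C.conjDiv D) D) :
    ∃ f : C.Mero, f ≠ 0 ∧ C.div f = C.conjDiv D - D ∧
      (f * C.sigma f = 1 ∨ f * C.sigma f = -1) := by
  obtain ⟨g, hg, hdiv⟩ := hL
  obtain ⟨r, hr, hgσ⟩ := C.exists_real_mul_sigma_eq hg (C.div_sigma_eq_neg hdiv)
  obtain ⟨c, hc, hcr⟩ := exists_mul_self_mul_eq_one_or_eq_neg_one hr
  have hcℂ : (c : ℂ) ≠ 0 := Complex.ofReal_ne_zero.2 hc
  have hc' : algebraMap ℂ C.Mero c ≠ 0 := (map_ne_zero _).2 hcℂ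
  refine ⟨algebraMap ℂ C.Mero c * g, mul_ne_zero hc' hg, ?_, ?_⟩
  · rw [C.div_mul _ _ hc' hg, C.div_algebraMap _ hcℂ, hdiv, zero_add]
  · rw [C.algebraMap_ofReal_mul_sigma, hgσ, ← map_mul, ← Complex.ofReal_mul]
    rcases hcr with h | h
    · left; rw [h, Complex.ofReal_one, map_one]
    · right; rw [h, Complex.ofReal_neg, Complex.ofReal_one, map_neg, map_one]
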